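/- arXiv:2504.11525 — 2 statements merged into one kernel-verified Lean document; each statement's English description precedes it below -/
import Mathlib

section
/- Let n ≥ 2 and d : Fin n → ℕ with d j ≥ 2 for every j, and set S = ∑ j, (d j − 1). The subspace of EuclideanSpace ℂ ((j : Fin n) → Fin (d j)) spanned by the states 𝔊_n^k for 1 ≤ k ≤ S − 1 has finrank S − 1, and every nonzero vector in this span is genuinely multipartite entangled; i.e., this span is a GES of dimension S − 1. -/
/-!
Every vector of the span has the form `ψ i = c (i₁ + ⋯ + iₙ)` with `c 0 = c S = 0`. A product
decomposition across a bipartition `(T, Tᶜ)` turns this into `c (s + t) = F s * G t` for all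
levels `s ≤ S_T`, `t ≤ S_Tᶜ`, both of which are positive. If `c k = 0`, split `k = s + t`: then
`F s = 0` or `G t = 0`, and moving one unit to the other side gives `c (k + 1) = 0` either way.
Starting from `c 0 = 0` this kills `c` on every level below `S`, so `ψ = 0`. The dimension count
holds because the `𝔊^k` with `k ≤ S` are nonzero with disjoint supports, hence orthogonal.
-/

noncomputable def gFrak (n : ℕ) (d : Fin n → ℕ) (k : ℕ) :
    EuclideanSpace ℂ ((j : Fin n) → Fin (d j)) :=
  WithLp.toLp 2 (fun i => if (∑ j, ((i j : ℕ))) = k then 1 else 0)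

def Biseparable {n : ℕ} {d : Fin n → ℕ} (T : Set (Fin n))
    (ψ : EuclideanSpace ℂ ((j : Fin n) → Fin (d j))) : Prop :=
  ∃ (φ : ((j : T) → Fin (d j.val)) → ℂ) (χ : ((j : ↥Tᶜ) → Fin (d j.val)) → ℂ),
    ∀ i, ψ i = φ (fun j => i j.val) * χ (fun j => i j.val)

def GME {n : ℕ} {d : Fin n → ℕ}
    (ψ : EuclideanSpace ℂ ((j : Fin n) → Fin (d j))) : Prop :=
  ψ ≠ 0 ∧ ∀ T : Set (Fin n), T ≠ ∅ → T ≠ Set.univ → ¬ Biseparable T ψ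

open scoped InnerProductSpace

theorem exists_le_and_sum_eq {ι : Type*} (s : Finset ι) (b : ι → ℕ) {k : ℕ}
    (hk : k ≤ ∑ j ∈ s, b j) : ∃ f : ι → ℕ, f ≤ b ∧ ∑ j ∈ s, f j = k := by
  classical
  induction s using Finset.induction_on generalizing k with
  | empty => exact ⟨0, fun _ => Nat.zero_le _, by rw [Finset.sum_empty] at hk ⊢; omega⟩
  | @insert a s ha ih =>
    rw [Finset.sum_insert ha] at hk
    obtain ⟨f, hfb, hfs⟩ := ih (k := k - min k (b a)) (by omega)
    refine ⟨Function.update f a (min k (b a)), fun j => ?_, ?_⟩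
    · rcases eq_or_ne j a with rfl | hj
      · simp
      · simpa [hj] using hfb j
    · rw [Finset.sum_insert ha, Function.update_self, Finset.sum_congr rfl fun j hj =>
        Function.update_of_ne (ne_of_mem_of_not_mem hj ha) _ _, hfs]
      omega

theorem exists_sum_val_eq {ι : Type*} [Fintype ι] {d : ι → ℕ} (hd : ∀ j, 1 ≤ d j) {k : ℕ}
    (hk : k ≤ ∑ j, (d j - 1)) : ∃ i : (j : ι) → Fin (d j), ∑ j, (i j : ℕ) = k := by
  obtain ⟨f, hfb, hfs⟩ := exists_le_and_sum_eq Finset.univ (fun j => d j - 1) hk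
  exact ⟨fun j => ⟨f j, by have := hd j; have : f j ≤ d j - 1 := hfb j; omega⟩, hfs⟩

theorem sum_val_le_sum_sub_one {ι : Type*} [Fintype ι] {d : ι → ℕ} (i : (j : ι) → Fin (d j)) :
    ∑ j, (i j : ℕ) ≤ ∑ j, (d j - 1) :=
  Finset.sum_le_sum fun j _ => Nat.le_sub_one_of_lt (i j).isLt

theorem one_le_sum_sub_one {ι : Type*} [Fintype ι] [Nonempty ι] {d : ι → ℕ}
    (hd : ∀ j, 2 ≤ d j) : 1 ≤ ∑ j, (d j - 1) := by
  obtain ⟨j⟩ := ‹Nonempty ι›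
  calc 1 ≤ d j - 1 := by have := hd j; omega
    _ ≤ _ := Finset.single_le_sum (fun j _ => Nat.zero_le (d j - 1)) (Finset.mem_univ j)

theorem eq_zero_of_apply_add_eq_mul {M₀ : Type*} [MulZeroClass M₀] [NoZeroDivisors M₀]
    {c F G : ℕ → M₀} {a b : ℕ} (ha : 1 ≤ a) (hb : 1 ≤ b)
    (hc : ∀ s t, s ≤ a → t ≤ b → c (s + t) = F s * G t) (hc0 : c 0 = 0) :
    ∀ k < a + b, c k = 0 := by
  intro k hk
  induction k with
  | zero => exact hc0
  | succ k ih =>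
    obtain ⟨s, t, rfl, hs, ht⟩ : ∃ s t, s + t = k ∧ s < a ∧ t < b :=
      ⟨min k (a - 1), k - min k (a - 1), by omega, by omega, by omega⟩
    rcases mul_eq_zero.1 ((hc s t hs.le ht.le).symm.trans (ih (by omega))) with hF | hG
    · rw [add_assoc, hc s (t + 1) hs.le ht, hF, zero_mul]
    · rw [add_right_comm, hc (s + 1) t hs ht.le, hG, mul_zero]

section
variable {n : ℕ} {d : Fin n → ℕ}

theorem gFrak_apply (k : ℕ) (i : (j : Fin n) → Fin (d j)) :
    gFrak n d k i = if ∑ j, (i j : ℕ) = k then 1 else 0 := rfl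

theorem gFrak_ne_zero (hd : ∀ j, 1 ≤ d j) {k : ℕ} (hk : k ≤ ∑ j, (d j - 1)) :
    gFrak n d k ≠ 0 := by
  obtain ⟨i, hi⟩ := exists_sum_val_eq hd hk
  intro h
  simpa [gFrak_apply, hi] using congr(($h).ofLp i)

theorem inner_gFrak_eq_zero {k l : ℕ} (hkl : k ≠ l) : ⟪gFrak n d k, gFrak n d l⟫_ℂ = 0 := by
  refine Finset.sum_eq_zero fun i _ => ?_
  by_cases hk : ∑ j, (i j : ℕ) = k <;> simp [gFrak_apply, hk, hkl]

theorem linearIndependent_gFrak (hd : ∀ j, 1 ≤ d j) {s : Finset ℕ}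
    (hs : ∀ k ∈ s, k ≤ ∑ j, (d j - 1)) : LinearIndependent ℂ fun k : s => gFrak n d k :=
  linearIndependent_of_ne_zero_of_inner_eq_zero (fun k => gFrak_ne_zero hd (hs k k.2))
    fun _ _ hkl => inner_gFrak_eq_zero (Subtype.coe_injective.ne hkl)

theorem exists_apply_eq_of_mem_span_gFrak {S : ℕ} {ψ : EuclideanSpace ℂ ((j : Fin n) → Fin (d j))}
    (hψ : ψ ∈ Submodule.span ℂ {ψ | ∃ k, 1 ≤ k ∧ k ≤ S - 1 ∧ ψ = gFrak n d k}) :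
    ∃ c : ℕ → ℂ, c 0 = 0 ∧ c S = 0 ∧ ∀ i, ψ i = c (∑ j, (i j : ℕ)) := by
  induction hψ using Submodule.span_induction with
  | mem _ h =>
    obtain ⟨k, hk1, hkS, rfl⟩ := h
    exact ⟨Pi.single k 1, Pi.single_eq_of_ne (by omega) _, Pi.single_eq_of_ne (by omega) _,
      fun i => by simp [gFrak_apply, Pi.single_apply]⟩
  | zero => exact ⟨0, rfl, rfl, fun _ => rfl⟩
  | add _ _ _ _ h₁ h₂ =>
    obtain ⟨c₁, h₁0, h₁S, h₁⟩ := h₁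
    obtain ⟨c₂, h₂0, h₂S, h₂⟩ := h₂
    exact ⟨c₁ + c₂, by simp [h₁0, h₂0], by simp [h₁S, h₂S], fun i => by simp [h₁, h₂]⟩
  | smul a _ _ h =>
    obtain ⟨c, hc0, hcS, hc⟩ := h
    exact ⟨a • c, by simp [hc0], by simp [hcS], fun i => by simp [hc]⟩

theorem Biseparable.exists_mul {T : Set (Fin n)} [DecidablePred (· ∈ T)]
    {ψ : EuclideanSpace ℂ ((j : Fin n) → Fin (d j))} (hsep : Biseparable T ψ)
    (hd : ∀ j, 1 ≤ d j) {c : ℕ → ℂ} (hψ : ∀ i, ψ i = c (∑ j, (i j : ℕ))) :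
    ∃ F G : ℕ → ℂ, ∀ s t, s ≤ ∑ j : T, (d j - 1) → t ≤ ∑ j : ↥Tᶜ, (d j - 1) →
      c (s + t) = F s * G t := by
  obtain ⟨φ, χ, hφχ⟩ := hsep
  choose x hx using fun s => exists_sum_val_eq (fun j : T => hd j) (min_le_right s _)
  choose y hy using fun t => exists_sum_val_eq (fun j : ↥Tᶜ => hd j) (min_le_right t _)
  refine ⟨fun s => φ (x s), fun t => χ (y t), fun s t hs ht => ?_⟩
  set i := (Equiv.piEquivPiSubtypeProd (· ∈ T) fun j => Fin (d j)).symm (x s, y t)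
  have hiT : (fun j : T => i j) = x s := funext fun j => dif_pos j.2
  have hiTc : (fun j : ↥Tᶜ => i j) = y t := funext fun j => dif_neg j.2
  have hi : ∑ j, (i j : ℕ) = s + t := calc
    _ = ∑ j : T, (x s j : ℕ) + ∑ j : ↥Tᶜ, (y t j : ℕ) := by
      rw [← hiT, ← hiTc]
      exact (Fintype.sum_subtype_add_sum_subtype (· ∈ T) _).symm
    _ = s + t := by rw [hx, hy, min_eq_left hs, min_eq_left ht]
  rw [← hi, ← hψ, hφχ, hiT, hiTc]

end

theorem gFrak_span_GES_general (n : ℕ) (d : Fin n → ℕ) (hd : ∀ j, 2 ≤ d j)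
    (S : ℕ) (hS : S = ∑ j, (d j - 1)) :
    Module.finrank ℂ
        ↥(Submodule.span ℂ
            {ψ | ∃ k, 1 ≤ k ∧ k ≤ S - 1 ∧ ψ = gFrak n d k}) = S - 1 ∧
    ∀ ψ ∈ Submodule.span ℂ {ψ | ∃ k, 1 ≤ k ∧ k ≤ S - 1 ∧ ψ = gFrak n d k},
      ψ ≠ 0 → GME ψ := by
  classical
  have hd1 : ∀ j, 1 ≤ d j := fun j => (hd j).trans' one_le_two
  refine ⟨?_, fun ψ hψ hψ0 => ⟨hψ0, fun T hT hTu hsep => hψ0 ?_⟩⟩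
  · have hrange : {ψ | ∃ k, 1 ≤ k ∧ k ≤ S - 1 ∧ ψ = gFrak n d k} =
        Set.range fun k : Finset.Icc 1 (S - 1) => gFrak n d k := by
      ext ψ
      simp [eq_comm, and_assoc]
    rw [hrange, finrank_span_eq_card (linearIndependent_gFrak hd1 fun k hk => ?_)]
    · simp
    · have := (Finset.mem_Icc.1 hk).2
      omega
  · obtain ⟨c, hc0, hcS, hψc⟩ := exists_apply_eq_of_mem_span_gFrak hψ
    obtain ⟨F, G, hFG⟩ := hsep.exists_mul hd1 hψc
    have : Nonempty T := (Set.nonempty_iff_ne_empty.2 hT).to_subtype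
    have : Nonempty ↥Tᶜ := (Set.nonempty_compl.2 hTu).to_subtype
    have hsplit : ∑ j : T, (d j - 1) + ∑ j : ↥Tᶜ, (d j - 1) = S :=
      hS ▸ Fintype.sum_subtype_add_sum_subtype (· ∈ T) fun j => d j - 1
    have hlt : ∀ k < S, c k = 0 := hsplit ▸ eq_zero_of_apply_add_eq_mul
      (one_le_sum_sub_one (ι := T) fun j => hd j) (one_le_sum_sub_one (ι := ↥Tᶜ) fun j => hd j)
      hFG hc0
    have hc : ∀ k ≤ S, c k = 0 := fun k hk => hk.lt_or_eq.elim (hlt k) (· ▸ hcS)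
    ext i
    rw [hψc, hc _ (hS ▸ sum_val_le_sum_sub_one i)]
    rfl

/-- Lemma 6: the span of the states `𝔊_n^k` for `1 ≤ k ≤ S − 1`, where
`S = ∑ j (d j − 1)`, is a GES of dimension `S − 1`. -/
theorem gFrak_span_GES (n : ℕ) (hn : 2 ≤ n) (d : Fin n → ℕ) (hd : ∀ j, 2 ≤ d j)
    (S : ℕ) (hS : S = ∑ j, (d j - 1)) :
    Module.finrank ℂ
        ↥(Submodule.span ℂ
            {ψ | ∃ k, 1 ≤ k ∧ k ≤ S - 1 ∧ ψ = gFrak n d k}) = S - 1 ∧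
    ∀ ψ ∈ Submodule.span ℂ {ψ | ∃ k, 1 ≤ k ∧ k ≤ S - 1 ∧ ψ = gFrak n d k},
      ψ ≠ 0 → GME ψ :=
  gFrak_span_GES_general n d hd S hS
end

section
/- Let n ≥ 2 and d : Fin n → ℕ with d j ≥ 2 for every j; set S = ∑ j, (d j − 1) and D = ∏ j, d j. Then there exist subspaces G₁ and G₂ of EuclideanSpace ℂ ((j : Fin n) → Fin (d j)), mutually orthogonal and each orthogonal to the coordinate basis vectors e_{(0,…,0)} and e_{(d_1−1,…,d_n−1)}, such that finrank G₁ = finrank G₂ = S − 1, every nonzero vector of G₁ and every nonzero vector of G₂ is genuinely multipartite entangled, and the orthogonal complement of span{e_{(0,…,0)}, e_{(d_1−1,…,d_n−1)}} ⊔ G₁ ⊔ G₂ has finrank D − 2S and contains no nonzero fully product vector. -/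
/-!
Sort the basis vectors `e_i` by their weight `w(i) = ∑ j, i j`, which ranges over `[0, S]`. For a
nowhere vanishing `ν`, the vectors `∑_{w(i) = w} ν(i) e_i` with `0 < w < S` span an
`(S - 1)`-dimensional space whose elements have the form `ψ i = a (w i) * ν i` with `a 0 = a S = 0`.
If such a `ψ ≠ 0` were biseparable across `(T, Tᶜ)`, its support would be a product set; evaluating
at points of prescribed weight `α` on `T` and `β` on `Tᶜ` gives `a (α + β) ≠ 0 ↔ B α ∧ C β`, and
this forces `a = 0` one weight at a time, starting from `a 0 = 0`.

`G₁` takes `ν = 1` and `G₂` a `ν` summing to zero over every sector `0 < w < S` (such sectors have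
at least two points), so `G₁ ⟂ G₂`. A product vector `i ↦ ∏ j, φ j (i j)` orthogonal to `A` and `G₁`
has all sector sums zero; these are the coefficients of `∏ j, ∑ a, φ j a X ^ a`, so some factor,
hence the vector, vanishes.
-/

/-- A vector of the multipartite space is *fully product* if it is a simple tensor. -/
def FullyProduct {n : ℕ} {d : Fin n → ℕ}
    (ψ : EuclideanSpace ℂ ((j : Fin n) → Fin (d j))) : Prop :=
  ∃ φ : (j : Fin n) → Fin (d j) → ℂ, ∀ i, ψ i = ∏ j, φ j (i j)

namespace MultipartiteGES

open Finset

theorem forall_not_of_add_iff_and (s B C : ℕ → Prop) {p q : ℕ} (hp : 1 ≤ p) (hq : 1 ≤ q)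
    (h : ∀ α ≤ p, ∀ β ≤ q, s (α + β) ↔ B α ∧ C β) (h0 : ¬ s 0) (htop : ¬ s (p + q)) :
    ∀ w ≤ p + q, ¬ s w := by
  intro w hw
  induction w with
  | zero => exact h0
  | succ w ih =>
    intro hsw
    have hw' : w + 1 ≠ p + q := fun e => htop (e ▸ hsw)
    -- `(u, v)` and `(u - 1, v + 1)` lie in the support `B × C`, hence so does `(u - 1, v)`.
    obtain ⟨u, v, huv, hu, hup, hvq⟩ : ∃ u v, u + v = w + 1 ∧ 1 ≤ u ∧ u ≤ p ∧ v + 1 ≤ q :=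
      ⟨max 1 (w + 2 - q), w + 1 - max 1 (w + 2 - q), by omega, by omega, by omega, by omega⟩
    have hC : C v := ((h u hup v (by omega)).1 (huv ▸ hsw)).2
    have hB : B (u - 1) :=
      ((h (u - 1) (by omega) (v + 1) hvq).1 (by rwa [show u - 1 + (v + 1) = w + 1 by omega])).1
    have hsw' := (h (u - 1) (by omega) v (by omega)).2 ⟨hB, hC⟩
    exact ih (by omega) (by rwa [show u - 1 + v = w by omega] at hsw')

theorem exists_ne_zero_sum_eq_zero {α K : Type*} [DecidableEq α] [Field K] [CharZero K]
    {s : Finset α} (hs : 1 < #s) : ∃ f : α → K, (∀ x, f x ≠ 0) ∧ ∑ x ∈ s, f x = 0 := by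
  obtain ⟨x₀, hx₀⟩ := card_pos.1 (by omega : 0 < #s)
  refine ⟨fun x => 1 - if x = x₀ then (#s : K) else 0, fun x => ?_, ?_⟩
  · dsimp only
    split_ifs
    · rw [sub_ne_zero, ne_comm, Ne, Nat.cast_eq_one]
      omega
    · simp
  · simp [sum_sub_distrib, hx₀]

theorem _root_.Submodule.IsOrtho.finrank_sup {𝕜 E : Type*} [RCLike 𝕜] [NormedAddCommGroup E]
    [InnerProductSpace 𝕜 E] {U V : Submodule 𝕜 E} [FiniteDimensional 𝕜 U] [FiniteDimensional 𝕜 V]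
    (h : U ⟂ V) : Module.finrank 𝕜 ↥(U ⊔ V) = Module.finrank 𝕜 U + Module.finrank 𝕜 V := by
  rw [← Submodule.finrank_sup_add_finrank_inf_eq, disjoint_iff.1 h.disjoint, finrank_bot, add_zero]

theorem finrank_span_pair_single {ι 𝕜 : Type*} [RCLike 𝕜] [Fintype ι] [DecidableEq ι] {p p' : ι}
    (h : p ≠ p') : Module.finrank 𝕜
      ↥(Submodule.span 𝕜 {EuclideanSpace.single p (1 : 𝕜), EuclideanSpace.single p' 1}) = 2 := by
  rw [Submodule.span_insert, Submodule.IsOrtho.finrank_sup, finrank_span_singleton,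
    finrank_span_singleton]
  · simp
  · simp
  · rw [Submodule.isOrtho_span]
    rintro _ rfl _ rfl
    simp [EuclideanSpace.inner_single_left, h]

theorem finrank_orthogonal_sup_sup {𝕜 E : Type*} [RCLike 𝕜] [NormedAddCommGroup E]
    [InnerProductSpace 𝕜 E] [FiniteDimensional 𝕜 E] {U V W : Submodule 𝕜 E} (hUV : U ⟂ V)
    (hUW : U ⟂ W) (hVW : V ⟂ W) :
    Module.finrank 𝕜 ↥(U ⊔ V ⊔ W)ᗮ =
      Module.finrank 𝕜 E - (Module.finrank 𝕜 U + Module.finrank 𝕜 V + Module.finrank 𝕜 W) := by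
  have h := Submodule.finrank_add_finrank_orthogonal (U ⊔ V ⊔ W)
  rw [(Submodule.isOrtho_sup_left.2 ⟨hUW, hVW⟩).finrank_sup, hUV.finrank_sup] at h
  omega

variable {n : ℕ} {d : Fin n → ℕ}

abbrev Config (d : Fin n → ℕ) := (j : Fin n) → Fin (d j)

def weight (i : Config d) : ℕ := ∑ j, (i j : ℕ)

def topWeight (d : Fin n → ℕ) : ℕ := ∑ j, (d j - 1)

def sector (d : Fin n → ℕ) (w : ℕ) : Finset (Config d) := univ.filter (weight · = w)

theorem mem_sector {w : ℕ} {i : Config d} : i ∈ sector d w ↔ weight i = w := by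
  simp [sector]

theorem coe_le_sub_one (i : Config d) (j : Fin n) : (i j : ℕ) ≤ d j - 1 :=
  Nat.le_sub_one_of_lt (i j).isLt

theorem weight_le (i : Config d) : weight i ≤ topWeight d :=
  sum_le_sum fun j _ => coe_le_sub_one i j

theorem eq_of_weight_eq_zero {i i' : Config d} (hi : weight i = 0) (hi' : weight i' = 0) :
    i = i' := by
  simp only [weight, sum_eq_zero_iff, mem_univ, true_implies] at hi hi'
  exact funext fun j => Fin.ext ((hi j).trans (hi' j).symm)

theorem eq_of_weight_eq_topWeight {i i' : Config d} (hi : weight i = topWeight d)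
    (hi' : weight i' = topWeight d) : i = i' := by
  have top {i : Config d} (hi : weight i = topWeight d) (j : Fin n) : (i j : ℕ) = d j - 1 :=
    (sum_eq_sum_iff_of_le fun j _ => coe_le_sub_one i j).1 hi j (mem_univ j)
  exact funext fun j => Fin.ext ((top hi j).trans (top hi' j).symm)

theorem exists_sum_coe_eq (hd : ∀ j, 0 < d j) (s : Finset (Fin n)) {α : ℕ}
    (hα : α ≤ ∑ j ∈ s, (d j - 1)) : ∃ i : Config d, ∑ j ∈ s, (i j : ℕ) = α := by
  induction s using Finset.induction_on generalizing α with
  | empty => exact ⟨fun j => ⟨0, hd j⟩, by simp_all⟩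
  | insert a s ha ih =>
    rw [sum_insert ha] at hα
    obtain ⟨i, hi⟩ := ih (α := α - min α (d a - 1)) (by omega)
    refine ⟨Function.update i a ⟨min α (d a - 1), by have := hd a; omega⟩, ?_⟩
    rw [sum_insert ha, Function.update_self,
      sum_congr rfl fun j hj => by rw [Function.update_of_ne (ne_of_mem_of_not_mem hj ha)], hi]
    dsimp only
    omega

theorem one_le_sum_sub_one (hd : ∀ j, 2 ≤ d j) {s : Finset (Fin n)} (hs : s.Nonempty) :
    1 ≤ ∑ j ∈ s, (d j - 1) :=
  let ⟨j, hj⟩ := hs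
  (by have := hd j; omega : 1 ≤ d j - 1).trans
    (single_le_sum (f := fun j => d j - 1) (fun _ _ => Nat.zero_le _) hj)

theorem weight_piecewise (s : Finset (Fin n)) (x y : Config d) :
    weight (s.piecewise x y) = ∑ j ∈ s, (x j : ℕ) + ∑ j ∈ sᶜ, (y j : ℕ) := by
  rw [weight, ← sum_add_sum_compl s]
  congr 1
  · exact sum_congr rfl fun j hj => by rw [piecewise_eq_of_mem _ _ _ hj]
  · exact sum_congr rfl fun j hj => by rw [piecewise_eq_of_notMem _ _ _ (mem_compl.1 hj)]

theorem exists_piecewise_weight (hd : ∀ j, 0 < d j) (s : Finset (Fin n)) :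
    ∃ x y : ℕ → Config d, ∀ α ≤ ∑ j ∈ s, (d j - 1), ∀ β ≤ ∑ j ∈ sᶜ, (d j - 1),
      ∑ j ∈ s, (s.piecewise (x α) (y β) j : ℕ) = α ∧
        weight (s.piecewise (x α) (y β)) = α + β := by
  have : Nonempty (Config d) := ⟨fun j => ⟨0, hd j⟩⟩
  choose! x hx using fun α (hα : α ≤ ∑ j ∈ s, (d j - 1)) => exists_sum_coe_eq hd s hα
  choose! y hy using fun β (hβ : β ≤ ∑ j ∈ sᶜ, (d j - 1)) => exists_sum_coe_eq hd sᶜ hβ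
  refine ⟨x, y, fun α hα β hβ => ⟨?_, ?_⟩⟩
  · exact (sum_congr rfl fun j hj => by rw [piecewise_eq_of_mem _ _ _ hj]).trans (hx α hα)
  · rw [weight_piecewise, hx α hα, hy β hβ]

theorem not_biseparable_of_eq_mul (hd : ∀ j, 2 ≤ d j) {T : Set (Fin n)} (hT : T ≠ ∅)
    (hT' : T ≠ Set.univ) {ψ : EuclideanSpace ℂ (Config d)} {a : ℕ → ℂ} {ν : Config d → ℂ}
    (hν : ∀ i, ν i ≠ 0) (hψ : ∀ i, ψ i = a (weight i) * ν i) (ha0 : a 0 = 0)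
    (haS : a (topWeight d) = 0) (hψ0 : ψ ≠ 0) : ¬ Biseparable T ψ := by
  classical
  rintro ⟨φ, χ, hφχ⟩
  obtain ⟨s, rfl⟩ : ∃ s : Finset (Fin n), ↑s = T := ⟨T.toFinset, T.coe_toFinset⟩
  obtain ⟨j₀, hj₀⟩ := (Set.ne_univ_iff_exists_notMem _).1 hT'
  have hp := one_le_sum_sub_one hd (coe_nonempty.1 (Set.nonempty_iff_ne_empty.2 hT))
  have hq := one_le_sum_sub_one hd ⟨j₀, mem_compl.2 hj₀⟩
  have hpq : ∑ j ∈ s, (d j - 1) + ∑ j ∈ sᶜ, (d j - 1) = topWeight d := sum_add_sum_compl s _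
  obtain ⟨x, y, hxy⟩ := exists_piecewise_weight (d := d) (fun j => by have := hd j; omega) s
  obtain ⟨i, hi⟩ : ∃ i, ψ i ≠ 0 := by
    by_contra! h
    exact hψ0 (by ext i; simp [h i])
  refine forall_not_of_add_iff_and (fun w => a w ≠ 0) (fun α => φ (fun j => x α j) ≠ 0)
    (fun β => χ (fun j => y β j) ≠ 0) hp hq (fun α hα β hβ => ?_) (by simpa using ha0)
    (by simpa [hpq] using haS) (weight i) (hpq ▸ weight_le i)
    (fun h => hi (by rw [hψ, h, zero_mul]))
  have e := hφχ (s.piecewise (x α) (y β))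
  rw [hψ, (hxy α hα β hβ).2] at e
  have hφ : (fun j : ↥(s : Set (Fin n)) => s.piecewise (x α) (y β) j) =
      fun j : ↥(s : Set (Fin n)) => x α j :=
    funext fun j => piecewise_eq_of_mem _ _ _ j.2
  have hχ : (fun j : ↥(s : Set (Fin n))ᶜ => s.piecewise (x α) (y β) j) =
      fun j : ↥(s : Set (Fin n))ᶜ => y β j :=
    funext fun j => piecewise_eq_of_notMem _ _ _ j.2
  rw [hφ, hχ] at e
  rw [← mul_ne_zero_iff, ← e, mul_ne_zero_iff_right (hν _)]

noncomputable def sectorVec (ν : Config d → ℂ) (w : ℕ) : EuclideanSpace ℂ (Config d) :=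
  WithLp.toLp 2 fun i => if weight i = w then ν i else 0

noncomputable def sectorSpan (ν : Config d → ℂ) : Submodule ℂ (EuclideanSpace ℂ (Config d)) :=
  Submodule.span ℂ (Set.range fun k : Fin (topWeight d - 1) => sectorVec ν (k + 1))

theorem exists_eq_mul_of_mem_sectorSpan {ν : Config d → ℂ} {ψ : EuclideanSpace ℂ (Config d)}
    (hψ : ψ ∈ sectorSpan ν) :
    ∃ a : ℕ → ℂ, a 0 = 0 ∧ a (topWeight d) = 0 ∧ ∀ i, ψ i = a (weight i) * ν i := by
  obtain ⟨c, rfl⟩ := (Submodule.mem_span_range_iff_exists_fun ℂ).1 hψ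
  refine ⟨fun w => ∑ k : Fin (topWeight d - 1), if w = k + 1 then c k else 0, by simp,
    sum_eq_zero fun k _ => if_neg (by omega), fun i => ?_⟩
  simp [sectorVec, sum_mul]

theorem gme_of_mem_sectorSpan (hd : ∀ j, 2 ≤ d j) {ν : Config d → ℂ} (hν : ∀ i, ν i ≠ 0)
    {ψ : EuclideanSpace ℂ (Config d)} (hψ : ψ ∈ sectorSpan ν) (hψ0 : ψ ≠ 0) : GME ψ :=
  let ⟨_, ha0, haS, ha⟩ := exists_eq_mul_of_mem_sectorSpan hψ
  ⟨hψ0, fun _ hT hT' => not_biseparable_of_eq_mul hd hT hT' hν ha ha0 haS hψ0⟩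

theorem inner_sectorVec_left (ν : Config d → ℂ) (w : ℕ) (ψ : EuclideanSpace ℂ (Config d)) :
    inner ℂ (sectorVec ν w) ψ = ∑ i ∈ sector d w, starRingEnd ℂ (ν i) * ψ i := by
  rw [PiLp.inner_apply, sector, sum_filter]
  exact sum_congr rfl fun i _ => by split_ifs <;> simp [sectorVec, *, mul_comm]

theorem inner_sectorVec (μ ν : Config d → ℂ) (w w' : ℕ) :
    inner ℂ (sectorVec μ w) (sectorVec ν w') =
      if w = w' then ∑ i ∈ sector d w, starRingEnd ℂ (μ i) * ν i else 0 := by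
  rw [inner_sectorVec_left]
  split_ifs with h
  · exact sum_congr rfl fun i hi => by simp [sectorVec, mem_sector.1 hi, h]
  · exact sum_eq_zero fun i hi => by simp [sectorVec, mem_sector.1 hi, h]

theorem sectorVec_ne_zero (hd : ∀ j, 0 < d j) {ν : Config d → ℂ} (hν : ∀ i, ν i ≠ 0) {w : ℕ}
    (hw : w ≤ topWeight d) : sectorVec ν w ≠ 0 := by
  obtain ⟨i, hi⟩ := exists_sum_coe_eq hd univ hw
  intro h
  exact hν i (by simpa [sectorVec, weight, hi] using congrArg (· i) h)

theorem finrank_sectorSpan (hd : ∀ j, 0 < d j) {ν : Config d → ℂ} (hν : ∀ i, ν i ≠ 0) :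
    Module.finrank ℂ (sectorSpan ν) = topWeight d - 1 := by
  rw [sectorSpan, finrank_span_eq_card, Fintype.card_fin]
  refine linearIndependent_of_ne_zero_of_inner_eq_zero
    (fun k => sectorVec_ne_zero hd hν (by have := k.isLt; omega)) fun k k' hkk =>
      (inner_sectorVec _ _ _ _).trans (if_neg (by simpa [Fin.ext_iff] using hkk))

theorem sectorSpan_isOrtho {μ ν : Config d → ℂ}
    (h : ∀ w, 0 < w → w < topWeight d → ∑ i ∈ sector d w, starRingEnd ℂ (μ i) * ν i = 0) :
    sectorSpan μ ⟂ sectorSpan ν := by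
  rw [sectorSpan, sectorSpan, Submodule.isOrtho_span]
  rintro _ ⟨k, rfl⟩ _ ⟨k', rfl⟩
  rw [inner_sectorVec]
  split_ifs
  · exact h _ k.1.succ_pos (by have := k.isLt; omega)
  · rfl

theorem span_pair_isOrtho_sectorSpan {p p' : Config d} (hp : weight p = 0)
    (hp' : weight p' = topWeight d) (ν : Config d → ℂ) :
    Submodule.span ℂ {EuclideanSpace.single p (1 : ℂ), EuclideanSpace.single p' 1} ⟂
      sectorSpan ν := by
  rw [sectorSpan, Submodule.isOrtho_span]
  rintro _ hu _ ⟨k, rfl⟩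
  have := k.isLt
  rcases hu with rfl | rfl
  · simp [EuclideanSpace.inner_single_left, sectorVec, hp]
  · simp [EuclideanSpace.inner_single_left, sectorVec, hp']
    omega

theorem one_lt_card_sector (hn : 2 ≤ n) (hd : ∀ j, 2 ≤ d j) {w : ℕ} (hw0 : 0 < w)
    (hw : w < topWeight d) : 1 < #(sector d w) := by
  set s : Finset (Fin n) := {⟨0, by omega⟩}
  have hp := one_le_sum_sub_one hd (s := s) (singleton_nonempty _)
  have hq := one_le_sum_sub_one hd (s := sᶜ) ⟨⟨1, by omega⟩, by simp [s]⟩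
  have hpq : ∑ j ∈ s, (d j - 1) + ∑ j ∈ sᶜ, (d j - 1) = topWeight d := sum_add_sum_compl s _
  obtain ⟨x, y, hxy⟩ := exists_piecewise_weight (d := d) (fun j => by have := hd j; omega) s
  obtain ⟨u, hu, hup, hwu, huw⟩ : ∃ u, 1 ≤ u ∧ u ≤ ∑ j ∈ s, (d j - 1) ∧
      w - u + 1 ≤ ∑ j ∈ sᶜ, (d j - 1) ∧ u ≤ w :=
    ⟨min (∑ j ∈ s, (d j - 1)) w, by omega, by omega, by omega, by omega⟩
  obtain ⟨hsum₁, hwt₁⟩ := hxy u hup (w - u) (by omega)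
  obtain ⟨hsum₂, hwt₂⟩ := hxy (u - 1) (by omega) (w - u + 1) hwu
  refine one_lt_card_iff.2 ⟨_, _, mem_sector.2 (hwt₁.trans (by omega)),
    mem_sector.2 (hwt₂.trans (by omega)), fun h => ?_⟩
  rw [h] at hsum₁
  omega

theorem exists_sectorTwist (hn : 2 ≤ n) (hd : ∀ j, 2 ≤ d j) :
    ∃ ν : Config d → ℂ, (∀ i, ν i ≠ 0) ∧
      ∀ w, 0 < w → w < topWeight d → ∑ i ∈ sector d w, ν i = 0 := by
  have : ∀ w, ∃ μ : Config d → ℂ, (∀ i, μ i ≠ 0) ∧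
      (0 < w → w < topWeight d → ∑ i ∈ sector d w, μ i = 0) := by
    intro w
    by_cases hw : 0 < w ∧ w < topWeight d
    · obtain ⟨μ, hμ, hsum⟩ :=
        exists_ne_zero_sum_eq_zero (K := ℂ) (one_lt_card_sector hn hd hw.1 hw.2)
      exact ⟨μ, hμ, fun _ _ => hsum⟩
    · exact ⟨1, fun _ => one_ne_zero, fun h0 hw' => absurd ⟨h0, hw'⟩ hw⟩
  choose μ hμ hsum using this
  refine ⟨fun i => μ (weight i) i, fun i => hμ _ i, fun w h0 hw => ?_⟩
  rw [← hsum w h0 hw]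
  exact sum_congr rfl fun i hi => congrArg (μ · i) (mem_sector.1 hi)

open Polynomial in
theorem coeff_prod_sum_C_mul_X_pow {R : Type*} [CommSemiring R] (φ : (j : Fin n) → Fin (d j) → R)
    (w : ℕ) :
    (∏ j, ∑ a : Fin (d j), C (φ j a) * X ^ (a : ℕ)).coeff w =
      ∑ i ∈ sector d w, ∏ j, φ j (i j) := by
  rw [prod_univ_sum, Fintype.piFinset_univ, finsetSum_coeff, sector, sum_filter]
  refine sum_congr rfl fun i _ => ?_
  rw [prod_mul_distrib, ← map_prod, prod_pow_eq_pow_sum, coeff_C_mul_X_pow]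
  simp only [weight, eq_comm]

open Polynomial in
theorem _root_.FullyProduct.eq_zero_of_sum_sector_eq_zero {ψ : EuclideanSpace ℂ (Config d)}
    (hψ : FullyProduct ψ) (h : ∀ w, ∑ i ∈ sector d w, ψ i = 0) : ψ = 0 := by
  obtain ⟨φ, hφ⟩ := hψ
  have hprod : ∏ j, ∑ a : Fin (d j), C (φ j a) * X ^ (a : ℕ) = 0 := Polynomial.ext fun w => by
    rw [coeff_prod_sum_C_mul_X_pow, coeff_zero, ← h w]
    exact sum_congr rfl fun i _ => (hφ i).symm
  obtain ⟨j, -, hj⟩ := prod_eq_zero_iff.1 hprod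
  have hφj (a : Fin (d j)) : φ j a = 0 := by
    simpa [finsetSum_coeff, coeff_C_mul_X_pow, Fin.val_inj] using congrArg (coeff · a) hj
  ext i
  rw [hφ i, prod_eq_zero (mem_univ j) (hφj _)]
  rfl

theorem sum_sector_eq_zero_of_mem_orthogonal {p p' : Config d} (hp : weight p = 0)
    (hp' : weight p' = topWeight d) {ψ : EuclideanSpace ℂ (Config d)}
    (hψ : ψ ∈ (Submodule.span ℂ {EuclideanSpace.single p (1 : ℂ), EuclideanSpace.single p' 1} ⊔
      sectorSpan 1)ᗮ) (w : ℕ) : ∑ i ∈ sector d w, ψ i = 0 := by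
  by_cases hw : 0 < w ∧ w < topWeight d
  · have hmem : sectorVec 1 w ∈ sectorSpan (1 : Config d → ℂ) :=
      Submodule.subset_span ⟨⟨w - 1, by omega⟩, by simp only; congr; omega⟩
    simpa [inner_sectorVec_left] using
      Submodule.inner_right_of_mem_orthogonal (Submodule.mem_sup_right hmem) hψ
  · have hcorner (q : Config d) (hq : q = p ∨ q = p') : ψ q = 0 := by
      have hmem : EuclideanSpace.single q (1 : ℂ) ∈ Submodule.span ℂ
          {EuclideanSpace.single p (1 : ℂ), EuclideanSpace.single p' 1} :=
        Submodule.subset_span (by rcases hq with rfl | rfl <;> simp)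
      simpa [EuclideanSpace.inner_single_left] using
        Submodule.inner_right_of_mem_orthogonal (Submodule.mem_sup_left hmem) hψ
    refine sum_eq_zero fun i hi => hcorner i ?_
    have := weight_le i
    rcases (by rw [mem_sector] at hi; omega : weight i = 0 ∨ weight i = topWeight d) with h | h
    · exact .inl (eq_of_weight_eq_zero h hp)
    · exact .inr (eq_of_weight_eq_topWeight h hp')

end MultipartiteGES

open MultipartiteGES in
/-- Theorem 8: the multipartite Hilbert space decomposes as
`span{|0…0⟩, |d₁−1 … dₙ−1⟩} ⊕ GES_{S−1} ⊕ GES_{S−1} ⊕ CES_{D−2S}`, i.e. there are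
two mutually orthogonal GESs of dimension `S − 1`, orthogonal to the two basis
vectors, whose joint orthocomplement (together with those basis vectors) is a CES
of dimension `D − 2S`. -/
theorem multipartite_two_GES_decomposition (n : ℕ) (hn : 2 ≤ n) (d : Fin n → ℕ)
    (hd : ∀ j, 2 ≤ d j) (S D : ℕ) (hS : S = ∑ j, (d j - 1)) (hD : D = ∏ j, d j)
    (A : Submodule ℂ (EuclideanSpace ℂ ((j : Fin n) → Fin (d j))))
    (hA : A = Submodule.span ℂ
        {EuclideanSpace.single (fun j => (⟨0, by have := hd j; omega⟩ : Fin (d j))) (1 : ℂ),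
         EuclideanSpace.single (fun j => (⟨d j - 1, by have := hd j; omega⟩ : Fin (d j))) (1 : ℂ)}) :
    ∃ G₁ G₂ : Submodule ℂ (EuclideanSpace ℂ ((j : Fin n) → Fin (d j))),
      Submodule.IsOrtho G₁ G₂ ∧ Submodule.IsOrtho A G₁ ∧ Submodule.IsOrtho A G₂ ∧
      Module.finrank ℂ ↥G₁ = S - 1 ∧ Module.finrank ℂ ↥G₂ = S - 1 ∧
      (∀ ψ ∈ G₁, ψ ≠ 0 → GME ψ) ∧ (∀ ψ ∈ G₂, ψ ≠ 0 → GME ψ) ∧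
      Module.finrank ℂ ↥((A ⊔ G₁ ⊔ G₂)ᗮ) = D - 2 * S ∧
      (∀ ψ ∈ (A ⊔ G₁ ⊔ G₂)ᗮ, FullyProduct ψ → ψ = 0) := by
  have hS' : S = topWeight d := hS
  subst hS' hD
  have hd₀ (j : Fin n) : 0 < d j := by have := hd j; omega
  have hbot : weight (fun j => (⟨0, hd₀ j⟩ : Fin (d j))) = 0 := by simp [weight]
  have htop : weight (fun j => (⟨d j - 1, by have := hd j; omega⟩ : Fin (d j))) = topWeight d :=
    rfl
  have hpos : 0 < topWeight d := one_le_sum_sub_one hd ⟨⟨0, by omega⟩, Finset.mem_univ _⟩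
  obtain ⟨ν, hν, hν_sum⟩ := exists_sectorTwist hn hd
  have h₁₂ : sectorSpan 1 ⟂ sectorSpan ν :=
    sectorSpan_isOrtho fun w h0 hw => by simpa using hν_sum w h0 hw
  have hA₁ : A ⟂ sectorSpan 1 := hA ▸ span_pair_isOrtho_sectorSpan hbot htop 1
  have hA₂ : A ⟂ sectorSpan ν := hA ▸ span_pair_isOrtho_sectorSpan hbot htop ν
  have hfinA : Module.finrank ℂ A = 2 :=
    hA ▸ finrank_span_pair_single fun h => by rw [h, htop] at hbot; omega
  have hfin₁ := finrank_sectorSpan (ν := 1) hd₀ fun _ => one_ne_zero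
  have hfin₂ := finrank_sectorSpan hd₀ hν
  refine ⟨sectorSpan 1, sectorSpan ν, h₁₂, hA₁, hA₂, hfin₁, hfin₂,
    fun ψ hψ => gme_of_mem_sectorSpan hd (fun _ => one_ne_zero) hψ,
    fun ψ hψ => gme_of_mem_sectorSpan hd hν hψ, ?_, fun ψ hψ hprod =>
      hprod.eq_zero_of_sum_sector_eq_zero (sum_sector_eq_zero_of_mem_orthogonal hbot htop
        (hA ▸ Submodule.orthogonal_le le_sup_left hψ))⟩
  rw [finrank_orthogonal_sup_sup hA₁ hA₂ h₁₂, hfinA, hfin₁, hfin₂, finrank_euclideanSpace,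
    Fintype.card_pi]
  simp only [Fintype.card_fin]
  omega
end
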